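/- arXiv:2308.13238 — 2 statements merged into one kernel-verified Lean document; each statement's English description precedes it below -/
import Mathlib

section
/- The Weyl–Zak transform Z_W acts on twisted translates via Z_W(T^t_{(k,l)}φ)(ξ,ξ',η) = e^{2πi(k·ξ + l·ξ')} e^{πi k·l} Z_W φ(ξ,ξ',η), for k,l ∈ ℤⁿ, ξ,ξ' ∈ 𝕋ⁿ, η ∈ ℝⁿ. -/
open MeasureTheory Complex
noncomputable section

abbrev Rn (n : ℕ) := Fin n → ℝ

def dot {n : ℕ} (x y : Rn n) : ℝ := ∑ i, x i * y i

def zc {n : ℕ} (k : Fin n → ℤ) : Rn n := fun i => (k i : ℝ)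

/-- Twisted translation at the level of functions on ℝⁿ × ℝⁿ. -/
def Ttw {n : ℕ} (k l : Fin n → ℤ) (f : Rn n × Rn n → ℂ) : Rn n × Rn n → ℂ :=
  fun p => Complex.exp (Real.pi * I * (dot p.1 (zc l) - dot p.2 (zc k))) *
    f (p.1 - zc k, p.2 - zc l)

/-- Kernel of the Weyl transform. -/
def weylKernel {n : ℕ} (g : Rn n × Rn n → ℂ) (ξ η : Rn n) : ℂ :=
  ∫ x : Rn n, g (x, η - ξ) * Complex.exp (Real.pi * I * dot x (ξ + η))

/-- The Weyl–Zak transform. -/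
def zakW {n : ℕ} (g : Rn n × Rn n → ℂ) (ξ ξ' η : Rn n) : ℂ :=
  ∑' m : Fin n → ℤ, weylKernel g (zc m + ξ) η * Complex.exp (-(2 * Real.pi) * I * dot (zc m) ξ')

/-- The bracket map. -/
def bracket {n : ℕ} (g h : Rn n × Rn n → ℂ) (p : Rn n × Rn n) : ℂ :=
  ∫ η : Rn n, zakW g p.1 p.2 η * (starRingEnd ℂ) (zakW h p.1 p.2 η)

/-- L²(ℝ²ⁿ). -/
abbrev H (n : ℕ) : Type := Lp ℂ 2 (volume : Measure (Rn n × Rn n))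

/-- Fundamental domain of the torus 𝕋ⁿ. -/
def Q (n : ℕ) : Set (Rn n) := Set.univ.pi fun _ => Set.Ico (0:ℝ) 1

/-- Lebesgue measure on 𝕋ⁿ × 𝕋ⁿ modelled on a fundamental domain. -/
def μT (n : ℕ) : Measure (Rn n × Rn n) := volume.restrict ((Q n) ×ˢ (Q n))

/-- L²(ℝⁿ). -/
abbrev L2Rn (n : ℕ) : Type := Lp ℂ 2 (volume : Measure (Rn n))

/-- L²(𝕋ⁿ×𝕋ⁿ, L²(ℝⁿ)). -/
abbrev HT (n : ℕ) : Type := Lp (L2Rn n) 2 (μT n)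

/-- A family of bounded operators on L²(ℝ²ⁿ) realizing the twisted translations. -/
def IsTTF {n : ℕ} (Tt : (Fin n → ℤ) → (Fin n → ℤ) → H n →L[ℂ] H n) : Prop :=
  ∀ (k l : Fin n → ℤ) (f : H n), (Tt k l f : Rn n × Rn n → ℂ) =ᵐ[volume] Ttw k l ⇑f

/-- The principal twisted shift-invariant space V^t(φ). -/
def Vt {n : ℕ} (Tt : (Fin n → ℤ) → (Fin n → ℤ) → H n →L[ℂ] H n) (φ : H n) :
    Submodule ℂ (H n) :=
  (Submodule.span ℂ {g : H n | ∃ k l, g = Tt k l φ}).topologicalClosure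

/-- φ is a Parseval frame generator of V^t(φ). -/
def IsParsevalGen {n : ℕ} (Tt : (Fin n → ℤ) → (Fin n → ℤ) → H n →L[ℂ] H n) (φ : H n) : Prop :=
  ∀ f ∈ Vt Tt φ, ∑' kl : (Fin n → ℤ) × (Fin n → ℤ),
    ‖(inner ℂ f (Tt kl.1 kl.2 φ) : ℂ)‖ ^ 2 = ‖f‖ ^ 2

/-- Modulation factor e^{2πi(k·ξ+l·ξ')} e^{πi k·l}. -/
def modFactor {n : ℕ} (k l : Fin n → ℤ) (p : Rn n × Rn n) : ℂ :=
  Complex.exp (2 * Real.pi * I * (dot (zc k) p.1 + dot (zc l) p.2)) *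
    Complex.exp (Real.pi * I * dot (zc k) (zc l))

/-- J is the isometric isomorphism 𝒥 induced by the Weyl–Zak transform:
it intertwines twisted translations with modulations. -/
def IsZakIsom {n : ℕ} (Tt : (Fin n → ℤ) → (Fin n → ℤ) → H n →L[ℂ] H n)
    (J : H n ≃ₗᵢ[ℂ] HT n) : Prop :=
  ∀ (k l : Fin n → ℤ) (f : H n),
    (J (Tt k l f) : Rn n × Rn n → L2Rn n) =ᵐ[μT n]
      fun p => modFactor k l p • (J f : Rn n × Rn n → L2Rn n) p

/-! The substitution `x ↦ x + k` in the integral defining the Weyl kernel shows that the kernel of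
`T^t_{(k,l)} φ` is the kernel of `φ` translated by `l` in `ξ` and multiplied by
`e^{πi k·l} e^{2πi k·ξ}`. The Zak transform in `ξ` turns the integer translation by `l` into the
factor `e^{2πi l·ξ'}`, and lets the modulation `e^{2πi k·ξ}` pass through because `k·m ∈ ℤ`. -/

open Matrix

lemma dot_eq_dotProduct {n : ℕ} (x y : Rn n) : dot x y = x ⬝ᵥ y := rfl

lemma zc_add {n : ℕ} (a b : Fin n → ℤ) : zc (a + b) = zc a + zc b := by
  funext i; simp [zc]

lemma zc_dotProduct_zc {n : ℕ} (k m : Fin n → ℤ) : zc k ⬝ᵥ zc m = ((k ⬝ᵥ m : ℤ) : ℝ) := by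
  simp [zc, dotProduct]

def zak {n : ℕ} (F : Rn n → ℂ) (ξ ξ' : Rn n) : ℂ :=
  ∑' m : Fin n → ℤ, F (zc m + ξ) * Complex.exp (-(2 * Real.pi) * I * dot (zc m) ξ')

lemma zakW_eq_zak {n : ℕ} (g : Rn n × Rn n → ℂ) (ξ ξ' η : Rn n) :
    zakW g ξ ξ' η = zak (fun x => weylKernel g x η) ξ ξ' := rfl

lemma zak_const_mul {n : ℕ} (c : ℂ) (F : Rn n → ℂ) (ξ ξ' : Rn n) :
    zak (fun x => c * F x) ξ ξ' = c * zak F ξ ξ' := by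
  simp only [zak, mul_assoc, tsum_mul_left]

lemma zak_exp_mul {n : ℕ} (k : Fin n → ℤ) (F : Rn n → ℂ) (ξ ξ' : Rn n) :
    zak (fun x => Complex.exp (2 * Real.pi * I * dot (zc k) x) * F x) ξ ξ' =
      Complex.exp (2 * Real.pi * I * dot (zc k) ξ) * zak F ξ ξ' := by
  simp only [zak, ← tsum_mul_left]
  refine tsum_congr fun m => ?_
  have hperiodic : Complex.exp (2 * Real.pi * I * dot (zc k) (zc m + ξ)) =
      Complex.exp (2 * Real.pi * I * dot (zc k) ξ) := by
    simp only [dot_eq_dotProduct, dotProduct_add, zc_dotProduct_zc]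
    push_cast
    rw [mul_add, Complex.exp_add, mul_comm (2 * (Real.pi : ℂ) * I),
      Complex.exp_int_mul_two_pi_mul_I, one_mul]
  rw [hperiodic, mul_assoc]

lemma zak_comp_add {n : ℕ} (l : Fin n → ℤ) (F : Rn n → ℂ) (ξ ξ' : Rn n) :
    zak (fun x => F (x + zc l)) ξ ξ' =
      Complex.exp (2 * Real.pi * I * dot (zc l) ξ') * zak F ξ ξ' := by
  rw [zak, zak, ← (Equiv.addRight l).tsum_eq
    (fun m => F (zc m + ξ) * Complex.exp (-(2 * Real.pi) * I * dot (zc m) ξ')), ← tsum_mul_left]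
  refine tsum_congr fun m => ?_
  simp only [Equiv.coe_addRight, zc_add, dot_eq_dotProduct, add_dotProduct]
  rw [add_right_comm, mul_left_comm, ← Complex.exp_add]
  congr 2
  push_cast
  ring

lemma weylKernel_Ttw {n : ℕ} (k l : Fin n → ℤ) (φ : Rn n × Rn n → ℂ) (ξ η : Rn n) :
    weylKernel (Ttw k l φ) ξ η =
      Complex.exp (Real.pi * I * dot (zc k) (zc l)) *
        (Complex.exp (2 * Real.pi * I * dot (zc k) ξ) * weylKernel φ (ξ + zc l) η) := by
  rw [weylKernel, ← integral_add_right_eq_self _ (zc k), weylKernel, ← integral_const_mul,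
    ← integral_const_mul]
  refine integral_congr_ae (Filter.Eventually.of_forall fun x => ?_)
  simp only [Ttw, add_sub_cancel_right, sub_sub]
  have hphase : Real.pi * I * (dot (x + zc k) (zc l) - dot (η - ξ) (zc k)) +
      Real.pi * I * dot (x + zc k) (ξ + η) = Real.pi * I * dot (zc k) (zc l) +
        (2 * Real.pi * I * dot (zc k) ξ + Real.pi * I * dot x (ξ + zc l + η)) := by
    simp only [dot_eq_dotProduct, add_dotProduct, dotProduct_add, sub_dotProduct,
      dotProduct_comm η, dotProduct_comm ξ]
    push_cast
    ring
  rw [mul_right_comm, ← Complex.exp_add, hphase, Complex.exp_add, Complex.exp_add]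
  ring

theorem zakW_twisted_translate_general (n : ℕ) (k l : Fin n → ℤ)
    (φ : Rn n × Rn n → ℂ)
    (ξ ξ' η : Rn n) :
    zakW (Ttw k l φ) ξ ξ' η =
      Complex.exp (2 * Real.pi * I * (dot (zc k) ξ + dot (zc l) ξ')) *
        Complex.exp (Real.pi * I * dot (zc k) (zc l)) * zakW φ ξ ξ' η := by
  simp only [zakW_eq_zak, weylKernel_Ttw, zak_const_mul, zak_exp_mul]
  rw [zak_comp_add l (fun x => weylKernel φ x η), mul_add, Complex.exp_add]
  ring

/-- the Weyl–Zak transform of a twisted translate. -/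
theorem zakW_twisted_translate (n : ℕ) (k l : Fin n → ℤ)
    (φ : Rn n × Rn n → ℂ) (hφ : Integrable φ (volume : Measure (Rn n × Rn n)))
    (ξ ξ' η : Rn n) :
    zakW (Ttw k l φ) ξ ξ' η =
      Complex.exp (2 * Real.pi * I * (dot (zc k) ξ + dot (zc l) ξ')) *
        Complex.exp (Real.pi * I * dot (zc k) (zc l)) * zakW φ ξ ξ' η :=
  zakW_twisted_translate_general n k l φ ξ ξ' η

end
end

section
/- Let φ ∈ L²(ℝ^{2n}) be a Parseval frame generator of V^t(φ) and let U : V^t(φ) → L²(ℝ^{2n}) be a bounded twisted shift preserving operator. Then for every m ∈ L²(𝕋ⁿ×𝕋ⁿ), (𝒥 ∘ U ∘ 𝒥⁻¹)(m·𝒥φ)(ξ,ξ') = m(ξ,ξ')·(𝒥 ∘ U)φ(ξ,ξ') for a.e. ξ,ξ' ∈ 𝕋ⁿ. -/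
open MeasureTheory Complex
noncomputable section

/-!
Identify `Q × Q` with the torus `𝕋^(n ⊔ n)`: the modulations `modFactor k l` become unimodular
multiples of the Fourier monomials, hence form an orthonormal family with dense span in
`L²(μT)`. Approximate `m` in `L²` by trigonometric polynomials `q_j = ∑ c_j(k,l) modFactor k l`.
The Parseval property of `φ` makes `c ↦ ∑ c(k,l) T_(k,l) φ` a contraction from `ℓ²` into
`V^t(φ)`, so `f_j = ∑ c_j(k,l) T_(k,l) φ` converges; since `𝒥 f_j = q_j • 𝒥 φ`, the limit is `g`.
As `U` commutes with the twisted translations, `𝒥 (U f_j) = q_j • 𝒥 (U φ)`, and passing to the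
limit along a subsequence converging a.e. gives the claim.
-/

open Filter Topology Finsupp

section Frames

variable {𝕜 E ι : Type*} [RCLike 𝕜] [NormedAddCommGroup E] [InnerProductSpace 𝕜 E]

theorem Orthonormal.smul_of_norm_eq_one {v : ι → E} (hv : Orthonormal 𝕜 v) {u : ι → 𝕜}
    (hu : ∀ i, ‖u i‖ = 1) : Orthonormal 𝕜 fun i => u i • v i := by
  classical
  rw [orthonormal_iff_ite] at hv ⊢
  intro i j
  rw [inner_smul_left, inner_smul_right, hv i j]
  split_ifs with h
  · subst h
    rw [mul_one, RCLike.conj_mul, hu, RCLike.ofReal_one, one_pow]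
  · rw [mul_zero, mul_zero]

theorem Orthonormal.norm_linearCombination_sq {e : ι → E} (he : Orthonormal 𝕜 e) (c : ι →₀ 𝕜) :
    ‖linearCombination 𝕜 e c‖ ^ 2 = c.sum fun _ a => ‖a‖ ^ 2 := by
  rw [← inner_self_eq_norm_sq (𝕜 := 𝕜), he.inner_finsupp_eq_sum_left, Finsupp.sum, map_sum,
    Finsupp.sum]
  refine Finset.sum_congr rfl fun i _ => ?_
  rw [RCLike.conj_mul, ← RCLike.ofReal_pow, RCLike.ofReal_re]

theorem norm_linearCombination_sq_le_of_tsum_eq {v : ι → E} (c : ι →₀ 𝕜)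
    (hv : ∑' i, ‖(inner 𝕜 (linearCombination 𝕜 v c) (v i) : 𝕜)‖ ^ 2 =
      ‖linearCombination 𝕜 v c‖ ^ 2) :
    ‖linearCombination 𝕜 v c‖ ^ 2 ≤ c.sum fun _ a => ‖a‖ ^ 2 := by
  set x := linearCombination 𝕜 v c
  rcases eq_or_ne x 0 with hx | hx
  · rw [hx, norm_zero, zero_pow two_ne_zero]
    exact Finset.sum_nonneg fun _ _ => sq_nonneg _
  have hsum : Summable fun i => ‖(inner 𝕜 x (v i) : 𝕜)‖ ^ 2 := by
    by_contra h
    rw [tsum_eq_zero_of_not_summable h, eq_comm, sq_eq_zero_iff, norm_eq_zero] at hv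
    exact hx hv
  have hbessel : ∑ i ∈ c.support, ‖(inner 𝕜 x (v i) : 𝕜)‖ ^ 2 ≤ ‖x‖ ^ 2 :=
    hv ▸ hsum.sum_le_tsum _ fun _ _ => sq_nonneg _
  have hxx : ‖x‖ ^ 2 ≤ ∑ i ∈ c.support, ‖c i‖ * ‖(inner 𝕜 x (v i) : 𝕜)‖ :=
    calc ‖x‖ ^ 2 = RCLike.re (inner 𝕜 x x) := (inner_self_eq_norm_sq x).symm
      _ = RCLike.re (∑ i ∈ c.support, c i * inner 𝕜 x (v i)) := by
        have hxsum : x = ∑ i ∈ c.support, c i • v i := linearCombination_apply 𝕜 c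
        nth_rw 2 [hxsum]
        simp only [inner_sum, inner_smul_right]
      _ ≤ ∑ i ∈ c.support, ‖c i‖ * ‖(inner 𝕜 x (v i) : 𝕜)‖ :=
        (RCLike.re_le_norm _).trans ((norm_sum_le _ _).trans_eq (by simp only [norm_mul]))
  have hcs := Finset.sum_mul_sq_le_sq_mul_sq c.support (fun i => ‖c i‖)
    fun i => ‖(inner 𝕜 x (v i) : 𝕜)‖
  have hx2 : 0 < ‖x‖ ^ 2 := by positivity
  refine le_of_mul_le_mul_right ?_ hx2
  calc (c.sum fun _ a => ‖a‖ ^ 2) * ‖x‖ ^ 2 ≥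
        (∑ i ∈ c.support, ‖c i‖ ^ 2) * ∑ i ∈ c.support, ‖(inner 𝕜 x (v i) : 𝕜)‖ ^ 2 :=
        mul_le_mul_of_nonneg_left hbessel (Finset.sum_nonneg fun _ _ => sq_nonneg _)
    _ ≥ (∑ i ∈ c.support, ‖c i‖ * ‖(inner 𝕜 x (v i) : 𝕜)‖) ^ 2 := hcs
    _ ≥ ‖x‖ ^ 2 * ‖x‖ ^ 2 := by rw [← sq]; exact pow_le_pow_left₀ hx2.le hxx 2

theorem norm_linearCombination_le_of_tsum_eq {F : Type*} [NormedAddCommGroup F]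
    [InnerProductSpace 𝕜 F] {v : ι → E} {e : ι → F} (c : ι →₀ 𝕜)
    (hv : ∑' i, ‖(inner 𝕜 (linearCombination 𝕜 v c) (v i) : 𝕜)‖ ^ 2 =
      ‖linearCombination 𝕜 v c‖ ^ 2) (he : Orthonormal 𝕜 e) :
    ‖linearCombination 𝕜 v c‖ ≤ ‖linearCombination 𝕜 e c‖ :=
  (sq_le_sq₀ (norm_nonneg _) (norm_nonneg _)).1 <|
    (he.norm_linearCombination_sq c).symm ▸ norm_linearCombination_sq_le_of_tsum_eq c hv

end Frames

theorem CauchySeq.of_dist_le {α β : Type*} [PseudoMetricSpace α] [PseudoMetricSpace β]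
    {u : ℕ → α} {v : ℕ → β} (hv : CauchySeq v) (h : ∀ i j, dist (u i) (u j) ≤ dist (v i) (v j)) :
    CauchySeq u := by
  refine Metric.cauchySeq_iff.2 fun ε hε => ?_
  obtain ⟨N, hN⟩ := Metric.cauchySeq_iff.1 hv ε hε
  exact ⟨N, fun i hi j hj => (h i j).trans_lt (hN i hi j hj)⟩

theorem exists_seq_tendsto_linearCombination {R M ι : Type*} [Semiring R] [TopologicalSpace M]
    [FrechetUrysohnSpace M] [AddCommMonoid M] [Module R M] [ContinuousConstSMul R M]
    [ContinuousAdd M] {v : ι → M}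
    (hv : (Submodule.span R (Set.range v)).topologicalClosure = ⊤) (x : M) :
    ∃ c : ℕ → ι →₀ R, Tendsto (fun j => linearCombination R v (c j)) atTop (𝓝 x) := by
  have hx : x ∈ closure (Set.range (linearCombination R v)) := by
    rw [← LinearMap.coe_range, range_linearCombination, ← Submodule.topologicalClosure_coe, hv]
    exact Submodule.mem_top
  obtain ⟨y, hy, hyx⟩ := mem_closure_iff_seq_limit.1 hx
  choose c hc using hy
  exact ⟨c, by simpa only [hc] using hyx⟩

namespace MeasureTheory.Lp

variable {α E 𝕜 ι : Type*} [MeasurableSpace α] {μ : Measure α} [NormedAddCommGroup E]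
  [NormedField 𝕜] [NormedSpace 𝕜 E]

theorem coeFn_linearCombination {p : ENNReal} [Fact (1 ≤ p)] {v : ι → Lp E p μ}
    {w : ι → α → E} (hvw : ∀ i, v i =ᵐ[μ] w i) (c : ι →₀ 𝕜) :
    linearCombination 𝕜 v c =ᵐ[μ] linearCombination 𝕜 w c := by
  induction c using Finsupp.induction_linear with
  | zero => simpa only [map_zero] using Lp.coeFn_zero E p μ
  | add c d hc hd => simpa only [map_add] using (Lp.coeFn_add _ _).trans (hc.add hd)
  | single i a =>
    simpa only [linearCombination_single] using (Lp.coeFn_smul a (v i)).trans ((hvw i).const_smul a)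

theorem ae_eq_smul_of_tendsto {p q : ENNReal} [Fact (1 ≤ p)] [Fact (1 ≤ q)]
    {u : ℕ → Lp E p μ} {x : Lp E p μ} {f : ℕ → Lp 𝕜 q μ} {g : Lp 𝕜 q μ} {w : α → E}
    (hu : Tendsto u atTop (𝓝 x)) (hf : Tendsto f atTop (𝓝 g))
    (h : ∀ j, u j =ᵐ[μ] fun a => f j a • w a) :
    x =ᵐ[μ] fun a => g a • w a := by
  obtain ⟨ns, hns, hfg⟩ := (tendstoInMeasure_of_tendsto_Lp hf).exists_seq_tendsto_ae
  obtain ⟨ms, hms, hux⟩ :=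
    (tendstoInMeasure_of_tendsto_Lp (hu.comp hns.tendsto_atTop)).exists_seq_tendsto_ae
  filter_upwards [hux, hfg, ae_all_iff.2 h] with a hua hfa ha
  refine tendsto_nhds_unique hua ?_
  simp only [Function.comp_apply, ha]
  exact (hfa.comp hms.tendsto_atTop).smul_const (w a)

end MeasureTheory.Lp

namespace WeylZak

variable {n : ℕ}

abbrev Idx (n : ℕ) : Type := (Fin n → ℤ) × (Fin n → ℤ)

/-- The measure on which `UnitAddTorus.mFourierLp` lives: inside `AddCircleMulti`, `volume` on
`UnitAddCircle` is locally redefined as `haarAddCircle`. -/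
abbrev torusMeasure (n : ℕ) : Measure (UnitAddTorus (Fin n ⊕ Fin n)) :=
  Measure.pi fun _ => AddCircle.haarAddCircle

def toTorus (n : ℕ) (p : Rn n × Rn n) : UnitAddTorus (Fin n ⊕ Fin n) :=
  fun i => ((Equiv.sumPiEquivProdPi fun _ => ℝ).symm p i : UnitAddCircle)

def ofTorus (n : ℕ) (z : UnitAddTorus (Fin n ⊕ Fin n)) : Rn n × Rn n :=
  Equiv.sumPiEquivProdPi (fun _ => ℝ) fun i => (AddCircle.equivIco 1 0 (z i) : ℝ)

lemma measurable_ofTorus : Measurable (ofTorus n) :=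
  (MeasurableEquiv.sumPiEquivProdPi fun _ => ℝ).measurable.comp <| measurable_pi_lambda _
    fun i => measurable_subtype_coe.comp
      ((AddCircle.measurableEquivIco 1 0).measurable.comp (measurable_pi_apply i))

lemma ofTorus_toTorus {p : Rn n × Rn n} (hp : p ∈ Q n ×ˢ Q n) : ofTorus n (toTorus n p) = p := by
  rw [Q, ← Equiv.sumPiEquivProdPi_symm_preimage_univ_pi (fun _ => ℝ) fun _ => Set.Ico 0 1] at hp
  have h : ∀ i, ((AddCircle.equivIco 1 0 (toTorus n p i) : ℝ)) =
      (Equiv.sumPiEquivProdPi fun _ => ℝ).symm p i := fun i => by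
    rw [toTorus, AddCircle.equivIco_coe_eq (by simpa using hp i (Set.mem_univ i))]
  simp only [ofTorus, h, Equiv.apply_symm_apply]

lemma measurePreserving_toTorus : MeasurePreserving (toTorus n) (μT n) (torusMeasure n) := by
  have hcircle : MeasurePreserving ((↑) : ℝ → UnitAddCircle) (volume.restrict (Set.Ico 0 1))
      AddCircle.haarAddCircle := by
    have h := UnitAddCircle.measurePreserving_mk 0
    rwa [zero_add, ← Measure.restrict_congr_set Ico_ae_eq_Ioc,
      AddCircle.volume_eq_smul_haarAddCircle, ENNReal.ofReal_one, one_smul] at h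
  have hpi := measurePreserving_pi _ _ fun _ : Fin n ⊕ Fin n => hcircle
  rw [← Measure.restrict_pi_pi, ← volume_pi] at hpi
  have hsum := (volume_measurePreserving_sumPiEquivProdPi_symm fun _ : Fin n ⊕ Fin n => ℝ)
    |>.restrict_preimage (MeasurableSet.univ_pi fun _ => measurableSet_Ico (a := (0:ℝ)) (b := 1))
  rw [MeasurableEquiv.coe_sumPiEquivProdPi_symm, Equiv.sumPiEquivProdPi_symm_preimage_univ_pi]
    at hsum
  exact hpi.comp hsum

lemma measurableSet_Q : MeasurableSet (Q n) :=
  MeasurableSet.univ_pi fun _ => measurableSet_Ico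

def compToTorus (n : ℕ) : Lp ℂ 2 (torusMeasure n) →ₗᵢ[ℂ] Lp ℂ 2 (μT n) :=
  Lp.compMeasurePreservingₗᵢ ℂ (toTorus n) measurePreserving_toTorus

lemma coeFn_compToTorus (f : Lp ℂ 2 (torusMeasure n)) : compToTorus n f =ᵐ[μT n] f ∘ toTorus n :=
  Lp.coeFn_compMeasurePreserving f measurePreserving_toTorus

lemma surjective_compToTorus : Function.Surjective (compToTorus n) := by
  intro f
  have hae : (f ∘ ofTorus n) ∘ toTorus n =ᵐ[μT n] f := by
    filter_upwards [ae_restrict_mem (measurableSet_Q.prod measurableSet_Q)] with p hp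
    simp [ofTorus_toTorus hp]
  have hmeas : AEStronglyMeasurable (f ∘ ofTorus n) (torusMeasure n) :=
    ((Lp.stronglyMeasurable f).comp_measurable measurable_ofTorus).aestronglyMeasurable
  have hmem : MemLp (f ∘ ofTorus n) 2 (torusMeasure n) := by
    rw [← measurePreserving_toTorus.map_eq] at hmeas ⊢
    exact (memLp_map_measure_iff hmeas measurePreserving_toTorus.measurable.aemeasurable).2
      ((Lp.memLp f).ae_eq hae.symm)
  refine ⟨hmem.toLp _, Lp.ext ?_⟩
  filter_upwards [coeFn_compToTorus (hmem.toLp _), hae,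
    measurePreserving_toTorus.quasiMeasurePreserving.ae_eq_comp hmem.coeFn_toLp] with p h1 h2 h3
  rw [h1, h3, h2]

lemma mFourier_toTorus (k l : Fin n → ℤ) (p : Rn n × Rn n) :
    UnitAddTorus.mFourier (Sum.elim k l) (toTorus n p) =
      Complex.exp (2 * Real.pi * I * (dot (zc k) p.1 + dot (zc l) p.2)) := by
  simp only [UnitAddTorus.mFourier, ContinuousMap.coe_mk, toTorus, fourier_coe_apply,
    Fintype.prod_sum_type, ← Complex.exp_sum, ← Complex.exp_add, dot, zc]
  congr 1
  push_cast
  simp only [div_one, Equiv.sumPiEquivProdPi_symm_apply, Sum.elim_inl, Sum.elim_inr, mul_add,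
    Finset.mul_sum, mul_assoc]

lemma norm_exp_pi_mul_I_mul (r : ℝ) : ‖Complex.exp (Real.pi * I * r)‖ = 1 := by
  rw [mul_right_comm, ← Complex.ofReal_mul, Complex.norm_exp_ofReal_mul_I]

def modFactorLp (n : ℕ) (kl : Idx n) : Lp ℂ 2 (μT n) :=
  Complex.exp (Real.pi * I * dot (zc kl.1) (zc kl.2)) •
    compToTorus n (UnitAddTorus.mFourierLp 2 (Sum.elim kl.1 kl.2))

lemma coeFn_modFactorLp (kl : Idx n) : modFactorLp n kl =ᵐ[μT n] modFactor kl.1 kl.2 := by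
  filter_upwards [Lp.coeFn_smul (Complex.exp (Real.pi * I * dot (zc kl.1) (zc kl.2)))
      (compToTorus n (UnitAddTorus.mFourierLp 2 (Sum.elim kl.1 kl.2))),
    coeFn_compToTorus (UnitAddTorus.mFourierLp 2 (Sum.elim kl.1 kl.2)),
    measurePreserving_toTorus.quasiMeasurePreserving.ae_eq_comp
      (UnitAddTorus.coeFn_mFourierLp 2 (Sum.elim kl.1 kl.2))] with p h1 h2 h3
  rw [modFactorLp, h1, Pi.smul_apply, h2, h3, Function.comp_apply, mFourier_toTorus, modFactor,
    smul_eq_mul, mul_comm]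

lemma orthonormal_modFactorLp : Orthonormal ℂ (modFactorLp n) :=
  ((UnitAddTorus.orthonormal_mFourier.comp_linearIsometry (compToTorus n)).comp _
    (Equiv.sumArrowEquivProdArrow (Fin n) (Fin n) ℤ).symm.injective).smul_of_norm_eq_one
    fun _ => norm_exp_pi_mul_I_mul _

lemma span_modFactorLp_closure_eq_top :
    (Submodule.span ℂ (Set.range (modFactorLp n))).topologicalClosure = ⊤ := by
  have hle : (Submodule.span ℂ (Set.range (UnitAddTorus.mFourierLp 2))).map
      (compToTorus n).toContinuousLinearMap.toLinearMap ≤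
      Submodule.span ℂ (Set.range (modFactorLp n)) := by
    rw [Submodule.map_span, Submodule.span_le, ← Set.range_comp]
    rintro _ ⟨κ, rfl⟩
    have hκ : compToTorus n (UnitAddTorus.mFourierLp 2 κ) =
        (Complex.exp (Real.pi * I * dot (zc (κ ∘ Sum.inl)) (zc (κ ∘ Sum.inr))))⁻¹ •
          modFactorLp n (κ ∘ Sum.inl, κ ∘ Sum.inr) := by
      rw [modFactorLp, inv_smul_smul₀ (Complex.exp_ne_zero _), Sum.elim_comp_inl_inr]
    rw [Function.comp_apply, ContinuousLinearMap.coe_coe, LinearIsometry.coe_toContinuousLinearMap,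
      hκ]
    exact Submodule.smul_mem _ _ (Submodule.subset_span ⟨_, rfl⟩)
  exact eq_top_mono (Submodule.topologicalClosure_mono hle)
    (surjective_compToTorus.denseRange.topologicalClosure_map_submodule
      (UnitAddTorus.span_mFourierLp_closure_eq_top (by norm_num)))

end WeylZak

open WeylZak

section Translates

variable {n : ℕ} {Tt : (Fin n → ℤ) → (Fin n → ℤ) → H n →L[ℂ] H n}

lemma IsZakIsom.coeFn_linearCombination {J : H n ≃ₗᵢ[ℂ] HT n} (hJ : IsZakIsom Tt J) (ψ : H n)
    (c : Idx n →₀ ℂ) :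
    J (linearCombination ℂ (fun kl : Idx n => Tt kl.1 kl.2 ψ) c) =ᵐ[μT n]
      fun p => linearCombination ℂ (modFactorLp n) c p • J ψ p := by
  have hJc : J (linearCombination ℂ (fun kl : Idx n => Tt kl.1 kl.2 ψ) c) =
      linearCombination ℂ (fun kl : Idx n => J (Tt kl.1 kl.2 ψ)) c :=
    apply_linearCombination ℂ J.toLinearEquiv.toLinearMap _ c
  filter_upwards [hJc ▸ Lp.coeFn_linearCombination (fun kl : Idx n => hJ kl.1 kl.2 ψ) c,
    Lp.coeFn_linearCombination coeFn_modFactorLp c] with p hJp hp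
  rw [hJp, hp]
  simp only [linearCombination_apply, Finsupp.sum, Finset.sum_apply, Pi.smul_apply,
    smul_eq_mul, Finset.sum_smul, smul_smul]

instance (φ : H n) : CompleteSpace (Vt Tt φ) :=
  (Submodule.isClosed_topologicalClosure _).completeSpace_coe

lemma translate_mem_Vt (φ : H n) (k l : Fin n → ℤ) : Tt k l φ ∈ Vt Tt φ :=
  Submodule.le_topologicalClosure _ (Submodule.subset_span ⟨k, l, rfl⟩)

lemma IsParsevalGen.norm_linearCombination_le {φ : H n} (hφP : IsParsevalGen Tt φ)
    (c : Idx n →₀ ℂ) :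
    ‖linearCombination ℂ (fun kl : Idx n => Tt kl.1 kl.2 φ) c‖ ≤
      ‖linearCombination ℂ (modFactorLp n) c‖ := by
  have hspan : Submodule.span ℂ (Set.range fun kl : Idx n => Tt kl.1 kl.2 φ) ≤ Vt Tt φ :=
    Submodule.span_le.2 (Set.range_subset_iff.2 fun kl => translate_mem_Vt φ kl.1 kl.2)
  have hmem : linearCombination ℂ (fun kl : Idx n => Tt kl.1 kl.2 φ) c ∈ Vt Tt φ :=
    hspan (by rw [← range_linearCombination]; exact LinearMap.mem_range_self _ c)
  exact norm_linearCombination_le_of_tsum_eq c (hφP _ hmem) orthonormal_modFactorLp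

end Translates

theorem J_commutation_lemma_general (n : ℕ)
    (Tt : (Fin n → ℤ) → (Fin n → ℤ) → H n →L[ℂ] H n)
    (J : H n ≃ₗᵢ[ℂ] HT n) (hJ : IsZakIsom Tt J)
    (φ : H n) (hφP : IsParsevalGen Tt φ) (hφmem : φ ∈ Vt Tt φ)
    (hinv : ∀ (k l : Fin n → ℤ), ∀ f ∈ Vt Tt φ, Tt k l f ∈ Vt Tt φ)
    (U : ↥(Vt Tt φ) →L[ℂ] H n)
    (hU : ∀ (k l : Fin n → ℤ) (f : ↥(Vt Tt φ)),
      U ⟨Tt k l ↑f, hinv k l ↑f f.2⟩ = Tt k l (U f))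
    (m : Rn n × Rn n → ℂ) (hm : MemLp m 2 (μT n))
    (g : ↥(Vt Tt φ))
    (hg : (J ↑g : Rn n × Rn n → L2Rn n) =ᵐ[μT n]
      fun p => m p • (J ↑φ : Rn n × Rn n → L2Rn n) p) :
    (J (U g) : Rn n × Rn n → L2Rn n) =ᵐ[μT n]
      fun p => m p • (J (U ⟨φ, hφmem⟩) : Rn n × Rn n → L2Rn n) p := by
  let T : Idx n → Vt Tt φ := fun kl => ⟨Tt kl.1 kl.2 φ, translate_mem_Vt φ kl.1 kl.2⟩
  have hT (c : Idx n →₀ ℂ) :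
      (linearCombination ℂ T c : H n) = linearCombination ℂ (fun kl : Idx n => Tt kl.1 kl.2 φ) c :=
    apply_linearCombination ℂ (Vt Tt φ).subtype T c
  obtain ⟨c, hc⟩ := exists_seq_tendsto_linearCombination span_modFactorLp_closure_eq_top (hm.toLp m)
  have hcauchy : CauchySeq fun j => linearCombination ℂ T (c j) :=
    hc.cauchySeq.of_dist_le fun i j => by
      rw [dist_eq_norm, dist_eq_norm, ← map_sub, ← map_sub, Submodule.coe_norm, hT]
      exact hφP.norm_linearCombination_le _
  obtain ⟨x, hx⟩ := cauchySeq_tendsto_of_complete hcauchy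
  have hxg : x = g := by
    refine Subtype.ext (J.injective (Lp.ext (EventuallyEq.trans ?_ hg.symm)))
    filter_upwards [Lp.ae_eq_smul_of_tendsto ((J.continuous.tendsto _).comp
      (tendsto_subtype_rng.1 hx)) hc
      fun j => (hT (c j)).symm ▸ hJ.coeFn_linearCombination φ (c j), hm.coeFn_toLp] with p hp hmp
    rw [hp, hmp]
  have hUT (j : ℕ) : U (linearCombination ℂ T (c j)) =
      linearCombination ℂ (fun kl : Idx n => Tt kl.1 kl.2 (U ⟨φ, hφmem⟩)) (c j) := by
    refine (apply_linearCombination ℂ U.toLinearMap T (c j)).trans ?_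
    exact congrArg (linearCombination ℂ · (c j)) (funext fun kl => hU kl.1 kl.2 ⟨φ, hφmem⟩)
  filter_upwards [Lp.ae_eq_smul_of_tendsto ((J.continuous.tendsto _).comp
    ((U.continuous.tendsto _).comp (hxg ▸ hx))) hc
    fun j => (hUT j).symm ▸ hJ.coeFn_linearCombination _ (c j), hm.coeFn_toLp] with p hp hmp
  rw [hp, hmp]

/-- 𝒥-commutation lemma, (𝒥∘U∘𝒥⁻¹)(m·𝒥φ) = m·(𝒥∘U)φ a.e. -/
theorem J_commutation_lemma (n : ℕ)
    (Tt : (Fin n → ℤ) → (Fin n → ℤ) → H n →L[ℂ] H n) (hTt : IsTTF Tt)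
    (J : H n ≃ₗᵢ[ℂ] HT n) (hJ : IsZakIsom Tt J)
    (φ : H n) (hφP : IsParsevalGen Tt φ) (hφmem : φ ∈ Vt Tt φ)
    (hinv : ∀ (k l : Fin n → ℤ), ∀ f ∈ Vt Tt φ, Tt k l f ∈ Vt Tt φ)
    (U : ↥(Vt Tt φ) →L[ℂ] H n)
    (hU : ∀ (k l : Fin n → ℤ) (f : ↥(Vt Tt φ)),
      U ⟨Tt k l ↑f, hinv k l ↑f f.2⟩ = Tt k l (U f))
    (m : Rn n × Rn n → ℂ) (hm : MemLp m 2 (μT n))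
    (g : ↥(Vt Tt φ))
    (hg : (J ↑g : Rn n × Rn n → L2Rn n) =ᵐ[μT n]
      fun p => m p • (J ↑φ : Rn n × Rn n → L2Rn n) p) :
    (J (U g) : Rn n × Rn n → L2Rn n) =ᵐ[μT n]
      fun p => m p • (J (U ⟨φ, hφmem⟩) : Rn n × Rn n → L2Rn n) p :=
  J_commutation_lemma_general n Tt J hJ φ hφP hφmem hinv U hU m hm g hg
end
end
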